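/- arXiv:1603.09028 — 5 statements merged into one kernel-verified Lean document; each statement's English description precedes it below -/
import Mathlib

section
/- Let (V,E,∂) be a locally finite graph and suppose given a vertex-coupling family of boundary maps on it, with c² := sup_{v∈V} ‖f ↦ (Γ_{v,e}f)_{e∈E_v} : H¹_v → ⊕_{e∈E_v} G_e‖² < ∞. Then the vertex-coupled space H¹ is a closed subspace of the Hilbert sum H^{1,dec} = ⊕_{v∈V} H¹_v, the coupled boundary map Γ is well defined (the value (Γf)_e does not depend on the choice of endpoint of e), and Γ is bounded with ‖Γf‖²_{⊕_{e∈E} G_e} ≤ (c²/2)·‖f‖²_{H^{1,dec}} for every f ∈ H¹. -/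
/-!
Each edge is counted at both of its endpoints: under the coupling condition
`Γ_{∂₋e,e} f_{∂₋e} = Γ_{∂₊e,e} f_{∂₊e}`, twice `‖(Γ f)_e‖²` is the sum of the two
endpoint contributions, and regrouping these by vertex bounds `2 ‖Γ f‖²` by
`∑_v c² ‖f_v‖² = c² ‖f‖²`. Closedness holds because every coupling condition is an
equation between continuous functions of `f`.
-/

/-- A locally finite graph: countable vertex set `V`, countable edge set `E`,
incidence map `bd e = (∂₋e, ∂₊e)`, no loops, and finitely many edges at each vertex. -/
structure LocallyFiniteGraph (V E : Type*) [Countable V] [Countable E] where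
  bd : E → V × V
  no_loops : ∀ e, (bd e).1 ≠ (bd e).2
  locFin : ∀ v : V, {e : E | (bd e).1 = v ∨ (bd e).2 = v}.Finite

open Finset

namespace lp

variable {α : Type*} {E : α → Type*} [∀ i, NormedAddCommGroup (E i)]

theorem continuous_apply (i : α) : Continuous fun f : lp E 2 => f i :=
  (_root_.continuous_apply i).comp uniformContinuous_coe.continuous

theorem sum_norm_sq_le_norm_sq (f : lp E 2) (s : Finset α) :
    ∑ i ∈ s, ‖f i‖ ^ 2 ≤ ‖f‖ ^ 2 := by
  simpa [Real.rpow_two] using sum_rpow_le_norm_rpow (by norm_num) f s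

end lp

theorem memℓp_two_of_sum_norm_sq_le {α : Type*} {E : α → Type*}
    [∀ i, NormedAddCommGroup (E i)] {f : ∀ i, E i} {C : ℝ}
    (hf : ∀ s : Finset α, ∑ i ∈ s, ‖f i‖ ^ 2 ≤ C) : Memℓp f 2 :=
  memℓp_gen' (C := C) (by simpa [Real.rpow_two] using hf)

namespace LocallyFiniteGraph

variable {V E : Type*} [Countable V] [Countable E] (G : LocallyFiniteGraph V E) [DecidableEq V]

theorem sum_endpoints_eq_sum_incident {M : Type*} [AddCommMonoid M] (w : V → E → M)
    (s : Finset E) :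
    ∑ e ∈ s, (w (G.bd e).1 e + w (G.bd e).2 e) =
      ∑ v ∈ s.image (fun e => (G.bd e).1) ∪ s.image (fun e => (G.bd e).2),
        ∑ e ∈ s with (G.bd e).1 = v ∨ (G.bd e).2 = v, w v e := by
  rw [sum_comm' (t' := s) (s' := fun e => {(G.bd e).1, (G.bd e).2})]
  · exact sum_congr rfl fun e _ => (sum_pair (f := (w · e)) (G.no_loops e)).symm
  · intro v e
    simp only [mem_union, mem_image, mem_filter, mem_insert, mem_singleton]
    constructor
    · rintro ⟨-, he, h | h⟩
      · exact ⟨.inl h.symm, he⟩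
      · exact ⟨.inr h.symm, he⟩
    · rintro ⟨rfl | rfl, he⟩
      · exact ⟨.inl ⟨e, he, rfl⟩, he, .inl rfl⟩
      · exact ⟨.inr ⟨e, he, rfl⟩, he, .inr rfl⟩

theorem sum_endpoints_le_sum_incident {M : Type*} [AddCommMonoid M] [PartialOrder M]
    [IsOrderedAddMonoid M] (w : V → E → M) (hw : 0 ≤ w) (s : Finset E) :
    ∑ e ∈ s, (w (G.bd e).1 e + w (G.bd e).2 e) ≤
      ∑ v ∈ s.image (fun e => (G.bd e).1) ∪ s.image (fun e => (G.bd e).2),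
        ∑ e ∈ (G.locFin v).toFinset, w v e := by
  rw [sum_endpoints_eq_sum_incident]
  refine sum_le_sum fun v _ => sum_le_sum_of_subset_of_nonneg ?_ fun e _ _ => hw v e
  intro e he
  simpa using (mem_filter.mp he).2

end LocallyFiniteGraph

section VertexCoupling

variable {V E : Type*} [Countable V] [Countable E] (G : LocallyFiniteGraph V E)
  {H1 : V → Type*} [∀ v, NormedAddCommGroup (H1 v)]
  {Gb : E → Type*} [∀ e, NormedAddCommGroup (Gb e)]

theorem isClosed_setOf_vertexCoupled (Γ : ∀ v e, H1 v → Gb e) (hΓ : ∀ v e, Continuous (Γ v e)) :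
    IsClosed {f : lp H1 2 |
      ∀ e, Γ (G.bd e).1 e (f (G.bd e).1) = Γ (G.bd e).2 e (f (G.bd e).2)} := by
  simp only [Set.ofPred_forall]
  exact isClosed_iInter fun e => isClosed_eq
    ((hΓ _ e).comp (lp.continuous_apply _)) ((hΓ _ e).comp (lp.continuous_apply _))

theorem sum_norm_sq_boundary_le_of_vertexCoupled [DecidableEq V] (Γ : ∀ v e, H1 v → Gb e) {c : ℝ}
    (hc : ∀ v (x : H1 v), ∑ e ∈ (G.locFin v).toFinset, ‖Γ v e x‖ ^ 2 ≤ c ^ 2 * ‖x‖ ^ 2)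
    (f : lp H1 2) (hf : ∀ e, Γ (G.bd e).1 e (f (G.bd e).1) = Γ (G.bd e).2 e (f (G.bd e).2))
    (s : Finset E) :
    ∑ e ∈ s, ‖Γ (G.bd e).1 e (f (G.bd e).1)‖ ^ 2 ≤ c ^ 2 / 2 * ‖f‖ ^ 2 := by
  set w : V → E → ℝ := fun v e => ‖Γ v e (f v)‖ ^ 2
  set T := s.image (fun e => (G.bd e).1) ∪ s.image (fun e => (G.bd e).2)
  have hdouble : 2 * ∑ e ∈ s, w (G.bd e).1 e = ∑ e ∈ s, (w (G.bd e).1 e + w (G.bd e).2 e) := by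
    rw [mul_sum]
    refine sum_congr rfl fun e _ => ?_
    simp only [w, hf e]
    ring
  have hbound : 2 * ∑ e ∈ s, w (G.bd e).1 e ≤ c ^ 2 * ‖f‖ ^ 2 :=
    calc 2 * ∑ e ∈ s, w (G.bd e).1 e
        ≤ ∑ v ∈ T, ∑ e ∈ (G.locFin v).toFinset, w v e :=
          hdouble ▸ G.sum_endpoints_le_sum_incident w (fun _ _ => by positivity) s
      _ ≤ ∑ v ∈ T, c ^ 2 * ‖f v‖ ^ 2 := sum_le_sum fun v _ => hc v (f v)
      _ = c ^ 2 * ∑ v ∈ T, ‖f v‖ ^ 2 := (mul_sum ..).symm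
      _ ≤ c ^ 2 * ‖f‖ ^ 2 := by gcongr; exact lp.sum_norm_sq_le_norm_sq f T
  linarith

end VertexCoupling

theorem stmt0_general {V E : Type*} [Countable V] [Countable E]
    (G : LocallyFiniteGraph V E)
    (H1 : V → Type*) [∀ v, NormedAddCommGroup (H1 v)] [∀ v, InnerProductSpace ℂ (H1 v)]
    (Gb : E → Type*) [∀ e, NormedAddCommGroup (Gb e)] [∀ e, InnerProductSpace ℂ (Gb e)]
    (Γ : ∀ v, ∀ e, H1 v →L[ℂ] Gb e)
    (c : ℝ)
    (hc : ∀ v, ∀ f : H1 v,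
      ∑ e ∈ (G.locFin v).toFinset, ‖Γ v e f‖ ^ 2 ≤ c ^ 2 * ‖f‖ ^ 2) :
    IsClosed {f : lp H1 2 |
        ∀ e, Γ (G.bd e).1 e (f (G.bd e).1) = Γ (G.bd e).2 e (f (G.bd e).2)} ∧
    ∀ f : lp H1 2,
      (∀ e, Γ (G.bd e).1 e (f (G.bd e).1) = Γ (G.bd e).2 e (f (G.bd e).2)) →
      -- the coupled boundary map is well defined: the value at `e` does not depend on the
      -- chosen endpoint of `e`, and the resulting family lies in `⊕_e G_e` ...
      (∀ e, ∀ v, ((G.bd e).1 = v ∨ (G.bd e).2 = v) →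
          Γ v e (f v) = Γ (G.bd e).1 e (f (G.bd e).1)) ∧
      Memℓp (fun e => Γ (G.bd e).1 e (f (G.bd e).1)) 2 ∧
      -- ... and `Γ` is bounded with `‖Γ f‖² ≤ (c²/2)·‖f‖²`
      ∑' e, ‖Γ (G.bd e).1 e (f (G.bd e).1)‖ ^ 2 ≤ c ^ 2 / 2 * ‖f‖ ^ 2 := by
  classical
  refine ⟨isClosed_setOf_vertexCoupled G (fun v e => Γ v e) fun v e => (Γ v e).continuous,
    fun f hf => ?_⟩
  have hbound := sum_norm_sq_boundary_le_of_vertexCoupled G (fun v e => Γ v e) hc f hf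
  refine ⟨?_, memℓp_two_of_sum_norm_sq_le hbound,
    Real.tsum_le_of_sum_le (fun _ => by positivity) hbound⟩
  rintro e v (rfl | rfl)
  · rfl
  · exact (hf e).symm

/-- Given a vertex-coupling family of boundary maps
`Γ_{v,e} : H¹_v → G_e` (`v ∈ V`, `e ∈ E_v`) with
`c² = sup_v ‖f ↦ (Γ_{v,e} f)_{e ∈ E_v}‖² < ∞`, the vertex-coupled space `H¹` is a closed
subspace of the ℓ²-direct sum `H^{1,dec} = ⊕_v H¹_v`, the coupled boundary map
`Γ f = (Γ_{∂₋e,e} f_{∂₋e})_e` is well defined (independent of the choice of endpoint,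
and an element of `⊕_e G_e`), and it is bounded with `‖Γ f‖² ≤ (c²/2)·‖f‖²`. -/
theorem stmt0 {V E : Type*} [Countable V] [Countable E]
    (G : LocallyFiniteGraph V E)
    (H1 : V → Type*) [∀ v, NormedAddCommGroup (H1 v)] [∀ v, InnerProductSpace ℂ (H1 v)]
    [∀ v, CompleteSpace (H1 v)]
    (Gb : E → Type*) [∀ e, NormedAddCommGroup (Gb e)] [∀ e, InnerProductSpace ℂ (Gb e)]
    [∀ e, CompleteSpace (Gb e)]
    (Γ : ∀ v, ∀ e, H1 v →L[ℂ] Gb e)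
    (c : ℝ)
    (hc : ∀ v, ∀ f : H1 v,
      ∑ e ∈ (G.locFin v).toFinset, ‖Γ v e f‖ ^ 2 ≤ c ^ 2 * ‖f‖ ^ 2) :
    IsClosed {f : lp H1 2 |
        ∀ e, Γ (G.bd e).1 e (f (G.bd e).1) = Γ (G.bd e).2 e (f (G.bd e).2)} ∧
    ∀ f : lp H1 2,
      (∀ e, Γ (G.bd e).1 e (f (G.bd e).1) = Γ (G.bd e).2 e (f (G.bd e).2)) →
      -- the coupled boundary map is well defined: the value at `e` does not depend on the
      -- chosen endpoint of `e`, and the resulting family lies in `⊕_e G_e` ...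
      (∀ e, ∀ v, ((G.bd e).1 = v ∨ (G.bd e).2 = v) →
          Γ v e (f v) = Γ (G.bd e).1 e (f (G.bd e).1)) ∧
      Memℓp (fun e => Γ (G.bd e).1 e (f (G.bd e).1)) 2 ∧
      -- ... and `Γ` is bounded with `‖Γ f‖² ≤ (c²/2)·‖f‖²`
      ∑' e, ‖Γ (G.bd e).1 e (f (G.bd e).1)‖ ^ 2 ≤ c ^ 2 / 2 * ‖f‖ ^ 2 :=
  stmt0_general G H1 Gb Γ c hc
end

section
/- Let (V,E,∂) be a locally finite graph with deg v ≥ 1 for every v ∈ V, let z ∈ ℂ with z ≠ 1, and let φ : E → ℂ. Define f : V ⊕ E → ℂ by f(e) := φ(e) for e ∈ E and f(v) := (1/((1−z)·deg v))·Σ_{e∈E_v} φ(e) for v ∈ V. Then: (i) (Δ_{SG} f)(v) = z·f(v) for every v ∈ V (f solves the Dirichlet problem on the subdivision graph with boundary data φ on E); (ii) for every e ∈ E, (Δ_{SG} f)(e) − z·φ(e) = (1−z)·φ(e) − (1/(2(1−z)))·Σ_{v∈{∂₋e,∂₊e}} (1/deg v)·Σ_{e'∈E_v} φ(e'). In other words,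 the Dirichlet-to-Neumann operator of the subdivision graph with boundary E is given by the explicit formula in (ii). -/
/-- The degree of a vertex in a locally finite graph. -/
noncomputable def LocallyFiniteGraph.deg {V E : Type*} [Countable V] [Countable E]
    (G : LocallyFiniteGraph V E) (v : V) : ℕ :=
  (G.locFin v).toFinset.card

namespace LocallyFiniteGraph

variable {V E : Type*} [Countable V] [Countable E] (G : LocallyFiniteGraph V E)

noncomputable def edgeAverage (φ : E → ℂ) (v : V) : ℂ :=
  (1 / (G.deg v : ℂ)) * ∑ e ∈ (G.locFin v).toFinset, φ e

noncomputable def subdivisionLaplacian (g : V ⊕ E → ℂ) : V ⊕ E → ℂ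
  | .inl v => g (.inl v) - G.edgeAverage (g ∘ .inr) v
  | .inr e => g (.inr e) - (g (.inl (G.bd e).1) + g (.inl (G.bd e).2)) / 2

noncomputable def dirichletSolution (z : ℂ) (φ : E → ℂ) : V ⊕ E → ℂ
  | .inl v => G.edgeAverage φ v / (1 - z)
  | .inr e => φ e

theorem subdivisionLaplacian_dirichletSolution_inl {z : ℂ} (hz : z ≠ 1) (φ : E → ℂ) (v : V) :
    G.subdivisionLaplacian (G.dirichletSolution z φ) (.inl v) =
      z * G.dirichletSolution z φ (.inl v) := by
  have hz' : 1 - z ≠ 0 := sub_ne_zero.mpr hz.symm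
  change G.edgeAverage φ v / (1 - z) - G.edgeAverage φ v = z * (G.edgeAverage φ v / (1 - z))
  field_simp
  ring

theorem subdivisionLaplacian_dirichletSolution_inr (z : ℂ) (φ : E → ℂ) (e : E) :
    G.subdivisionLaplacian (G.dirichletSolution z φ) (.inr e) - z * φ e =
      (1 - z) * φ e - 1 / (2 * (1 - z)) *
        (G.edgeAverage φ (G.bd e).1 + G.edgeAverage φ (G.bd e).2) := by
  simp only [subdivisionLaplacian, dirichletSolution, ← div_div]
  ring

end LocallyFiniteGraph

theorem stmt5_general {V E : Type*} [Countable V] [Countable E]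
    (G : LocallyFiniteGraph V E)
    (z : ℂ) (hz : z ≠ 1) (φ : E → ℂ)
    (f : V ⊕ E → ℂ)
    (hfE : ∀ e, f (Sum.inr e) = φ e)
    (hfV : ∀ v, f (Sum.inl v) =
      (1 / ((1 - z) * (G.deg v : ℂ))) * ∑ e ∈ (G.locFin v).toFinset, φ e) :
    -- (i) `f` solves the Dirichlet problem on the subdivision graph with boundary data `φ`
    (∀ v : V,
      f (Sum.inl v) - (1 / (G.deg v : ℂ)) * ∑ e ∈ (G.locFin v).toFinset, f (Sum.inr e)
        = z * f (Sum.inl v)) ∧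
    -- (ii) the Dirichlet-to-Neumann operator on the boundary `E` is given explicitly
    (∀ e : E,
      (f (Sum.inr e) - (f (Sum.inl (G.bd e).1) + f (Sum.inl (G.bd e).2)) / 2) - z * φ e
        = (1 - z) * φ e
          - (1 / (2 * (1 - z)))
            * ((1 / (G.deg (G.bd e).1 : ℂ)) * ∑ e' ∈ (G.locFin (G.bd e).1).toFinset, φ e'
              + (1 / (G.deg (G.bd e).2 : ℂ)) * ∑ e' ∈ (G.locFin (G.bd e).2).toFinset, φ e')) := by
  have hf : f = G.dirichletSolution z φ := by
    funext x
    cases x with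
    | inl v => rw [hfV, mul_comm (1 - z), ← div_div]; simp only [LocallyFiniteGraph.dirichletSolution, LocallyFiniteGraph.edgeAverage]; ring
    | inr e => exact hfE e
  subst hf
  exact ⟨G.subdivisionLaplacian_dirichletSolution_inl hz φ,
    G.subdivisionLaplacian_dirichletSolution_inr z φ⟩

/-- On the subdivision graph `SG` (vertex set `V ⊕ E`, each `e` joined
to its endpoints), the function `f` with `f(e) = φ(e)` and
`f(v) = (1/((1−z)·deg v))·Σ_{e∈E_v} φ(e)` solves the Dirichlet problem
`(Δ_{SG} f)(v) = z·f(v)` at all `v ∈ V`, and on the boundary `E` one has the explicit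
Dirichlet-to-Neumann formula
`(Δ_{SG} f)(e) − z·φ(e) = (1−z)·φ(e) − (1/(2(1−z)))·Σ_{v=∂₋e,∂₊e} (1/deg v)·Σ_{e'∈E_v} φ(e')`. -/
theorem stmt5 {V E : Type*} [Countable V] [Countable E]
    (G : LocallyFiniteGraph V E) (hdeg : ∀ v, 1 ≤ G.deg v)
    (z : ℂ) (hz : z ≠ 1) (φ : E → ℂ)
    (f : V ⊕ E → ℂ)
    (hfE : ∀ e, f (Sum.inr e) = φ e)
    (hfV : ∀ v, f (Sum.inl v) =
      (1 / ((1 - z) * (G.deg v : ℂ))) * ∑ e ∈ (G.locFin v).toFinset, φ e) :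
    -- (i) `f` solves the Dirichlet problem on the subdivision graph with boundary data `φ`
    (∀ v : V,
      f (Sum.inl v) - (1 / (G.deg v : ℂ)) * ∑ e ∈ (G.locFin v).toFinset, f (Sum.inr e)
        = z * f (Sum.inl v)) ∧
    -- (ii) the Dirichlet-to-Neumann operator on the boundary `E` is given explicitly
    (∀ e : E,
      (f (Sum.inr e) - (f (Sum.inl (G.bd e).1) + f (Sum.inl (G.bd e).2)) / 2) - z * φ e
        = (1 - z) * φ e
          - (1 / (2 * (1 - z)))
            * ((1 / (G.deg (G.bd e).1 : ℂ)) * ∑ e' ∈ (G.locFin (G.bd e).1).toFinset, φ e'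
              + (1 / (G.deg (G.bd e).2 : ℂ)) * ∑ e' ∈ (G.locFin (G.bd e).2).toFinset, φ e')) :=
  stmt5_general G z hz φ f hfE hfV
end

section
/- Let (V,E,∂) be a locally finite simple graph (the map e ↦ {∂₋e,∂₊e} is injective) which is r-regular (deg v = r for all v ∈ V) with r ≥ 2, and let z ∈ ℂ with z ≠ 1. Define Λ(z) : (E → ℂ) → (E → ℂ) by (Λ(z)φ)(e) := (1−z)·φ(e) − (1/(2(1−z)))·Σ_{v∈{∂₋e,∂₊e}} (1/r)·Σ_{e'∈E_v} φ(e') (the Dirichlet-to-Neumann operator of the subdivision graph with boundary E). Then Λ(z) = ((1−z) − (1−z)⁻¹)·id + ((r−1)/((1−z)·r))·Δ_{LG}, where Δ_{LG} is the normalised Laplacian of the line graph of (V,E,∂). -/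
/-!
In a simple graph the only edge sharing both endpoints with `e` is `e` itself, so by
inclusion–exclusion the line-graph neighbourhood sum of `φ` at `e` is
`Σ_{E_{∂₋e}} φ + Σ_{E_{∂₊e}} φ − 2 φ(e)`. After this substitution both sides are the same
rational expression in `z` and `r`.
-/

theorem Finset.sum_erase_union_of_inter_eq_singleton {ι M : Type*} [DecidableEq ι]
    [AddCommGroup M] {A B : Finset ι} {a : ι} (hAB : A ∩ B = {a}) (f : ι → M) :
    ∑ i ∈ (A ∪ B).erase a, f i = ∑ i ∈ A, f i + ∑ i ∈ B, f i - 2 • f a := by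
  have ha : a ∈ A ∪ B := by
    have : a ∈ A ∩ B := hAB ▸ Finset.mem_singleton_self a
    exact Finset.mem_union_left _ (Finset.mem_of_mem_inter_left this)
  have hunion := Finset.sum_union_inter (s₁ := A) (s₂ := B) (f := f)
  rw [hAB, Finset.sum_singleton, ← Finset.sum_erase_add _ _ ha] at hunion
  rw [← hunion, two_nsmul]
  abel

namespace LocallyFiniteGraph

variable {V E : Type*} [Countable V] [Countable E] (G : LocallyFiniteGraph V E)

theorem eq_of_incident_fst_of_incident_snd
    (hsimple : Function.Injective fun e => ({(G.bd e).1, (G.bd e).2} : Set V)) {e e' : E}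
    (h₁ : (G.bd e').1 = (G.bd e).1 ∨ (G.bd e').2 = (G.bd e).1)
    (h₂ : (G.bd e').1 = (G.bd e).2 ∨ (G.bd e').2 = (G.bd e).2) : e' = e := by
  apply hsimple
  have hne := G.no_loops e
  rcases h₁ with h₁ | h₁ <;> rcases h₂ with h₂ | h₂
  · exact absurd (h₁.symm.trans h₂) hne
  · simp only [h₁, h₂]
  · simp only [h₁, h₂, Set.pair_comm]
  · exact absurd (h₁.symm.trans h₂) hne

theorem incident_inter_incident_eq_singleton [DecidableEq E]
    (hsimple : Function.Injective fun e => ({(G.bd e).1, (G.bd e).2} : Set V)) (e : E) :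
    (G.locFin (G.bd e).1).toFinset ∩ (G.locFin (G.bd e).2).toFinset = {e} := by
  ext e'
  simp only [Finset.mem_inter, Finset.mem_singleton, Set.Finite.mem_toFinset, Set.mem_ofPred_eq]
  constructor
  · rintro ⟨h₁, h₂⟩
    exact G.eq_of_incident_fst_of_incident_snd hsimple h₁ h₂
  · rintro rfl
    exact ⟨Or.inl rfl, Or.inr rfl⟩

end LocallyFiniteGraph

theorem stmt6_general {V E : Type*} [Countable V] [Countable E] [DecidableEq E]
    (G : LocallyFiniteGraph V E)
    (hsimple : Function.Injective fun e => ({(G.bd e).1, (G.bd e).2} : Set V))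
    (r : ℕ) (hr : 2 ≤ r)
    (z : ℂ) (hz : z ≠ 1) :
    ∀ (φ : E → ℂ) (e : E),
      (1 - z) * φ e
        - (1 / (2 * (1 - z)))
          * ((1 / (r : ℂ)) * ∑ e' ∈ (G.locFin (G.bd e).1).toFinset, φ e'
            + (1 / (r : ℂ)) * ∑ e' ∈ (G.locFin (G.bd e).2).toFinset, φ e')
      = ((1 - z) - (1 - z)⁻¹) * φ e
        + (((r : ℂ) - 1) / ((1 - z) * (r : ℂ)))
          * (φ e - (1 / (2 * (r : ℂ) - 2))
              * ∑ e' ∈ ((G.locFin (G.bd e).1).toFinset ∪ (G.locFin (G.bd e).2).toFinset).erase e,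
                  φ e') := by
  intro φ e
  rw [Finset.sum_erase_union_of_inter_eq_singleton
    (G.incident_inter_incident_eq_singleton hsimple e)]
  have hz' : 1 - z ≠ 0 := sub_ne_zero.mpr hz.symm
  have hr₀ : (r : ℂ) ≠ 0 := by exact_mod_cast (by omega : r ≠ 0)
  have hr₁ : (r : ℂ) - 1 ≠ 0 := sub_ne_zero.mpr (by exact_mod_cast (by omega : r ≠ 1))
  rw [show 2 * (r : ℂ) - 2 = 2 * (r - 1) by ring]
  field_simp
  ring

/-- For an `r`-regular locally finite simple graph (`r ≥ 2`) and `z ≠ 1`,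
the Dirichlet-to-Neumann operator of the subdivision graph with boundary `E`,
`(Λ(z)φ)(e) = (1−z)·φ(e) − (1/(2(1−z)))·Σ_{v=∂₋e,∂₊e} (1/r)·Σ_{e'∈E_v} φ(e')`,
equals `((1−z) − (1−z)⁻¹)·id + ((r−1)/((1−z)·r))·Δ_{LG}` where `Δ_{LG}` is the normalised
Laplacian of the line graph,
`(Δ_{LG}φ)(e) = φ(e) − (1/(2r−2))·Σ_{e'≠e sharing an endpoint with e} φ(e')`. -/
theorem stmt6 {V E : Type*} [Countable V] [Countable E] [DecidableEq E]
    (G : LocallyFiniteGraph V E)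
    (hsimple : Function.Injective fun e => ({(G.bd e).1, (G.bd e).2} : Set V))
    (r : ℕ) (hr : 2 ≤ r) (hreg : ∀ v, G.deg v = r)
    (z : ℂ) (hz : z ≠ 1) :
    ∀ (φ : E → ℂ) (e : E),
      (1 - z) * φ e
        - (1 / (2 * (1 - z)))
          * ((1 / (r : ℂ)) * ∑ e' ∈ (G.locFin (G.bd e).1).toFinset, φ e'
            + (1 / (r : ℂ)) * ∑ e' ∈ (G.locFin (G.bd e).2).toFinset, φ e')
      = ((1 - z) - (1 - z)⁻¹) * φ e
        + (((r : ℂ) - 1) / ((1 - z) * (r : ℂ)))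
          * (φ e - (1 / (2 * (r : ℂ) - 2))
              * ∑ e' ∈ ((G.locFin (G.bd e).1).toFinset ∪ (G.locFin (G.bd e).2).toFinset).erase e,
                  φ e') :=
  stmt6_general G hsimple r hr z hz
end

section
/- Let (V,E,∂) be a locally finite graph carrying two vertex-coupling families of boundary maps with energy structures (H_v, ι_v, h_v) and (H̃_v, ι̃_v, h̃_v). Let δ > 0, let J¹_v : H¹_v → H̃¹_v and J'¹_v : H̃¹_v → H¹_v be bounded with sup_v ‖J¹_v‖ < ∞ and sup_v ‖J'¹_v‖ < ∞ and |h̃_v(J¹_v f, u) − h_v(f, J'¹_v u)| ≤ δ·‖f‖_{H¹_v}·‖u‖_{H̃¹_v} for all v, f ∈ H¹_v, u ∈ H̃¹_v. Let B and B̃ be smoothing operators for the coupled spaces H¹ and H̃¹ respectively, satisfying ‖B̃(J^{1,dec} f)‖_{H̃^{1,dec}} ≤ δ·‖f‖ for all f ∈ H¹ and ‖B(J'^{1,dec} u)‖_{H^{1,dec}} ≤ δ·‖u‖ for all u ∈ H̃¹, where J^{1,dec} := ⊕_v J¹_v and J'^{1,dec} := ⊕_v J'¹_v. Set J¹ :=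 (id − B̃)∘J^{1,dec} and J'¹ := (id − B)∘J'^{1,dec}. Then the coupled energy forms are 3δ-close: |h̃(J¹ f, u) − h(f, J'¹ u)| ≤ 3δ·‖f‖_{H^{1,dec}}·‖u‖_{H̃^{1,dec}} for all f ∈ H¹ and u ∈ H̃¹, where h(f,g) := Σ_v h_v(f_v, g_v) and h̃(f,g) := Σ_v h̃_v(f_v, g_v). -/
/-!
Since `ι_v` is a contraction, `h_v(a, b) = ⟪a, b⟫ - ⟪ι_v a, ι_v b⟫` is a positive semidefinite
sesquilinear form dominated by the inner product, so Cauchy–Schwarz gives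
`|h_v(a, b)| ≤ ‖a‖ ‖b‖`, and the ℓ²-Cauchy–Schwarz inequality extends this to `h = ∑_v h_v`.
Expanding `J¹f = J^{1,dec}f - B̃ J^{1,dec}f` and `J'¹u = J'^{1,dec}u - B J'^{1,dec}u` splits
`h̃(J¹f, u) - h(f, J'¹u)` into the decoupled difference, which is at most `δ ‖f‖ ‖u‖` vertex by
vertex, and the two smoothing terms `h̃(B̃ J^{1,dec}f, u)` and `h(f, B J'^{1,dec}u)`, each at most
`δ ‖f‖ ‖u‖` by the smallness of `B̃ J^{1,dec}` and `B J'^{1,dec}` on the coupled spaces.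
-/

open scoped InnerProductSpace

open scoped ENNReal

section EnergyForm

variable {W W' : Type*} [NormedAddCommGroup W] [InnerProductSpace ℂ W]
  [NormedAddCommGroup W'] [InnerProductSpace ℂ W']

noncomputable def energyForm (T : W →L[ℂ] W') (a b : W) : ℂ := ⟪a, b⟫_ℂ - ⟪T a, T b⟫_ℂ

variable (T : W →L[ℂ] W')

theorem energyForm_sub_left (a a' b : W) :
    energyForm T (a - a') b = energyForm T a b - energyForm T a' b := by
  simp only [energyForm, map_sub, inner_sub_left]; ring

theorem energyForm_sub_right (a b b' : W) :
    energyForm T a (b - b') = energyForm T a b - energyForm T a b' := by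
  simp only [energyForm, map_sub, inner_sub_right]; ring

theorem re_energyForm_self (a : W) : RCLike.re (energyForm T a a) = ‖a‖ ^ 2 - ‖T a‖ ^ 2 := by
  simp only [energyForm, map_sub, inner_self_eq_norm_sq]

theorem norm_energyForm_le (hT : ∀ x, ‖T x‖ ≤ ‖x‖) (a b : W) :
    ‖energyForm T a b‖ ≤ ‖a‖ * ‖b‖ := by
  let c : PreInnerProductSpace.Core ℂ W :=
    { inner := energyForm T
      conj_inner_symm := fun x y => by simp only [energyForm, map_sub, inner_conj_symm]
      re_inner_nonneg := fun x => by
        rw [re_energyForm_self]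
        exact sub_nonneg.2 (pow_le_pow_left₀ (norm_nonneg _) (hT x) 2)
      add_left := fun x y z => by simp only [energyForm, map_add, inner_add_left]; ring
      smul_left := fun x y r => by simp only [energyForm, map_smul, inner_smul_left]; ring }
  have cs : ‖energyForm T a b‖ * ‖energyForm T b a‖
      ≤ RCLike.re (energyForm T a a) * RCLike.re (energyForm T b b) :=
    InnerProductSpace.Core.inner_mul_inner_self_le (c := c) a b
  have hsymm : ‖energyForm T b a‖ = ‖energyForm T a b‖ :=
    InnerProductSpace.Core.norm_inner_symm (c := c) b a
  have hre (x : W) : RCLike.re (energyForm T x x) ≤ ‖x‖ ^ 2 := by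
    rw [re_energyForm_self]; exact sub_le_self _ (sq_nonneg _)
  rw [hsymm] at cs
  refine pow_le_pow_iff_left₀ (norm_nonneg _) (by positivity) two_ne_zero |>.1 ?_
  calc ‖energyForm T a b‖ ^ 2 ≤ RCLike.re (energyForm T a a) * RCLike.re (energyForm T b b) := by
        rw [sq]; exact cs
    _ ≤ ‖a‖ ^ 2 * ‖b‖ ^ 2 := mul_le_mul (hre a) (hre b) (c.re_inner_nonneg b) (sq_nonneg _)
    _ = (‖a‖ * ‖b‖) ^ 2 := (mul_pow _ _ _).symm

end EnergyForm

namespace lp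

variable {V : Type*} {E₁ E₂ : V → Type*} [∀ v, NormedAddCommGroup (E₁ v)]
  [∀ v, NormedAddCommGroup (E₂ v)] {p q : ℝ≥0∞} (f : lp E₁ p) (g : lp E₂ q)

theorem summable_norm_mul_norm_and_tsum_le (hpq : p.toReal.HolderConjugate q.toReal) :
    (Summable fun v => ‖f v‖ * ‖g v‖) ∧ ∑' v, ‖f v‖ * ‖g v‖ ≤ ‖f‖ * ‖g‖ := by
  obtain ⟨C, -, hC', hC⟩ := Real.inner_le_Lp_mul_Lq_hasSum_of_nonneg hpq (norm_nonneg' f)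
    (norm_nonneg' g) (fun v => norm_nonneg (f v)) (fun v => norm_nonneg (g v))
    (lp.hasSum_norm hpq.pos f) (lp.hasSum_norm hpq.symm.pos g)
  exact ⟨hC.summable, hC.tsum_eq ▸ hC'⟩

theorem summable_of_norm_le_mul_norm_mul_norm (hpq : p.toReal.HolderConjugate q.toReal)
    {F : Type*} [NormedAddCommGroup F] [CompleteSpace F] {φ : V → F} {C : ℝ}
    (h : ∀ v, ‖φ v‖ ≤ C * (‖f v‖ * ‖g v‖)) : Summable φ :=
  .of_norm_bounded ((summable_norm_mul_norm_and_tsum_le f g hpq).1.mul_left C) h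

theorem norm_tsum_le_of_norm_le_mul_norm_mul_norm (hpq : p.toReal.HolderConjugate q.toReal)
    {F : Type*} [NormedAddCommGroup F] {φ : V → F} {C : ℝ} (hC : 0 ≤ C)
    (h : ∀ v, ‖φ v‖ ≤ C * (‖f v‖ * ‖g v‖)) : ‖∑' v, φ v‖ ≤ C * (‖f‖ * ‖g‖) := by
  obtain ⟨hfg, hfg_le⟩ := summable_norm_mul_norm_and_tsum_le f g hpq
  have hφ : Summable fun v => ‖φ v‖ :=
    .of_nonneg_of_le (fun v => norm_nonneg _) h (hfg.mul_left C)
  calc ‖∑' v, φ v‖ ≤ ∑' v, ‖φ v‖ := norm_tsum_le_tsum_norm hφ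
    _ ≤ ∑' v, C * (‖f v‖ * ‖g v‖) := hφ.tsum_le_tsum h (hfg.mul_left C)
    _ = C * ∑' v, ‖f v‖ * ‖g v‖ := tsum_mul_left
    _ ≤ C * (‖f‖ * ‖g‖) := mul_le_mul_of_nonneg_left hfg_le hC

end lp

theorem ENNReal.holderConjugate_toReal_two :
    (2 : ℝ≥0∞).toReal.HolderConjugate (2 : ℝ≥0∞).toReal := by
  simpa using Real.HolderConjugate.two_two

section CoupledEnergyForm

variable {V : Type*} {W W' : V → Type*} [∀ v, NormedAddCommGroup (W v)]
  [∀ v, InnerProductSpace ℂ (W v)] [∀ v, NormedAddCommGroup (W' v)]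
  [∀ v, InnerProductSpace ℂ (W' v)] {T : ∀ v, W v →L[ℂ] W' v}

noncomputable def coupledEnergyForm (T : ∀ v, W v →L[ℂ] W' v) (x y : lp W 2) : ℂ :=
  ∑' v, energyForm (T v) (x v) (y v)

theorem summable_energyForm (hT : ∀ v x, ‖T v x‖ ≤ ‖x‖) (x y : lp W 2) :
    Summable fun v => energyForm (T v) (x v) (y v) :=
  lp.summable_of_norm_le_mul_norm_mul_norm x y ENNReal.holderConjugate_toReal_two (C := 1)
    fun v => (norm_energyForm_le (T v) (hT v) _ _).trans_eq (one_mul _).symm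

theorem norm_coupledEnergyForm_le (hT : ∀ v x, ‖T v x‖ ≤ ‖x‖) (x y : lp W 2) :
    ‖coupledEnergyForm T x y‖ ≤ ‖x‖ * ‖y‖ :=
  (lp.norm_tsum_le_of_norm_le_mul_norm_mul_norm x y ENNReal.holderConjugate_toReal_two
    zero_le_one fun v => (norm_energyForm_le (T v) (hT v) _ _).trans_eq (one_mul _).symm).trans_eq
    (one_mul _)

theorem coupledEnergyForm_sub_left (hT : ∀ v x, ‖T v x‖ ≤ ‖x‖) (x x' y : lp W 2) :
    coupledEnergyForm T (x - x') y = coupledEnergyForm T x y - coupledEnergyForm T x' y := by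
  rw [coupledEnergyForm, coupledEnergyForm, coupledEnergyForm,
    ← (summable_energyForm hT x y).tsum_sub (summable_energyForm hT x' y)]
  exact tsum_congr fun v => energyForm_sub_left (T v) _ _ _

theorem coupledEnergyForm_sub_right (hT : ∀ v x, ‖T v x‖ ≤ ‖x‖) (x y y' : lp W 2) :
    coupledEnergyForm T x (y - y') = coupledEnergyForm T x y - coupledEnergyForm T x y' := by
  rw [coupledEnergyForm, coupledEnergyForm, coupledEnergyForm,
    ← (summable_energyForm hT x y).tsum_sub (summable_energyForm hT x y')]
  exact tsum_congr fun v => energyForm_sub_right (T v) _ _ _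

theorem norm_coupledEnergyForm_sub_le {Wt Wt' : V → Type*} [∀ v, NormedAddCommGroup (Wt v)]
    [∀ v, InnerProductSpace ℂ (Wt v)] [∀ v, NormedAddCommGroup (Wt' v)]
    [∀ v, InnerProductSpace ℂ (Wt' v)] {S : ∀ v, Wt v →L[ℂ] Wt' v}
    (hS : ∀ v x, ‖S v x‖ ≤ ‖x‖) (hT : ∀ v x, ‖T v x‖ ≤ ‖x‖) {δ : ℝ} (hδ : 0 ≤ δ)
    {x : lp W 2} {x' : lp Wt 2} {y : lp Wt 2} {y' : lp W 2}
    (h : ∀ v, ‖energyForm (S v) (x' v) (y v) - energyForm (T v) (x v) (y' v)‖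
      ≤ δ * (‖x v‖ * ‖y v‖)) :
    ‖coupledEnergyForm S x' y - coupledEnergyForm T x y'‖ ≤ δ * (‖x‖ * ‖y‖) := by
  rw [coupledEnergyForm, coupledEnergyForm,
    ← (summable_energyForm hS x' y).tsum_sub (summable_energyForm hT x y')]
  exact lp.norm_tsum_le_of_norm_le_mul_norm_mul_norm x y ENNReal.holderConjugate_toReal_two hδ h

end CoupledEnergyForm

theorem norm_sub_sub_sub_le {E : Type*} [SeminormedAddCommGroup E] (a b c d : E) :
    ‖a - b - (c - d)‖ ≤ ‖a - c‖ + ‖b‖ + ‖d‖ :=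
  calc ‖a - b - (c - d)‖ = ‖(a - c) + -b + d‖ := by congr 1; abel
    _ ≤ ‖a - c‖ + ‖-b‖ + ‖d‖ := norm_add₃_le
    _ = ‖a - c‖ + ‖b‖ + ‖d‖ := by rw [norm_neg]

theorem stmt14_general {V E : Type*} [Countable V] [Countable E]
    (G : LocallyFiniteGraph V E)
    -- first coupling family with energy structure
    (H1 : V → Type*) [∀ v, NormedAddCommGroup (H1 v)] [∀ v, InnerProductSpace ℂ (H1 v)]
    (Gb : E → Type*) [∀ e, NormedAddCommGroup (Gb e)] [∀ e, InnerProductSpace ℂ (Gb e)]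
    (Hv : V → Type*) [∀ v, NormedAddCommGroup (Hv v)] [∀ v, InnerProductSpace ℂ (Hv v)]
    (Γ : ∀ v, ∀ e, H1 v →L[ℂ] Gb e)
    (ι : ∀ v, H1 v →L[ℂ] Hv v)
    (hι_contr : ∀ v, ∀ f : H1 v, ‖ι v f‖ ≤ ‖f‖)
    -- second (tilde) coupling family with energy structure
    (H1t : V → Type*) [∀ v, NormedAddCommGroup (H1t v)] [∀ v, InnerProductSpace ℂ (H1t v)]
    (Gbt : E → Type*) [∀ e, NormedAddCommGroup (Gbt e)] [∀ e, InnerProductSpace ℂ (Gbt e)]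
    (Hvt : V → Type*) [∀ v, NormedAddCommGroup (Hvt v)] [∀ v, InnerProductSpace ℂ (Hvt v)]
    (Γt : ∀ v, ∀ e, H1t v →L[ℂ] Gbt e)
    (ιt : ∀ v, H1t v →L[ℂ] Hvt v)
    (hιt_contr : ∀ v, ∀ u : H1t v, ‖ιt v u‖ ≤ ‖u‖)
    -- componentwise identification operators and their ℓ²-direct sums
    (J1 : ∀ v, H1 v →L[ℂ] H1t v)
    (J'1 : ∀ v, H1t v →L[ℂ] H1 v)
    (Jdec : lp H1 2 →L[ℂ] lp H1t 2)
    (hJdec : ∀ (f : lp H1 2) (v : V), Jdec f v = J1 v (f v))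
    (J'dec : lp H1t 2 →L[ℂ] lp H1 2)
    (hJ'dec : ∀ (u : lp H1t 2) (v : V), J'dec u v = J'1 v (u v))
    (δ : ℝ) (hδ : 0 < δ)
    -- `δ`-closeness of the building-block energy forms
    (hclose : ∀ v, ∀ (f : H1 v) (u : H1t v),
      ‖((⟪J1 v f, u⟫_ℂ - ⟪ιt v (J1 v f), ιt v u⟫_ℂ)
          - (⟪f, J'1 v u⟫_ℂ - ⟪ι v f, ι v (J'1 v u)⟫_ℂ))‖
        ≤ δ * ‖f‖ * ‖u‖)
    -- smoothing operators for the two coupled spaces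
    (B : lp H1 2 →L[ℂ] lp H1 2)
    (Bt : lp H1t 2 →L[ℂ] lp H1t 2)
    (hBt_small : ∀ f : lp H1 2,
      (∀ e, Γ (G.bd e).1 e (f (G.bd e).1) = Γ (G.bd e).2 e (f (G.bd e).2)) →
      ‖Bt (Jdec f)‖ ≤ δ * ‖f‖)
    (hB_small : ∀ u : lp H1t 2,
      (∀ e, Γt (G.bd e).1 e (u (G.bd e).1) = Γt (G.bd e).2 e (u (G.bd e).2)) →
      ‖B (J'dec u)‖ ≤ δ * ‖u‖) :
    ∀ f : lp H1 2,
      (∀ e, Γ (G.bd e).1 e (f (G.bd e).1) = Γ (G.bd e).2 e (f (G.bd e).2)) →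
      ∀ u : lp H1t 2,
        (∀ e, Γt (G.bd e).1 e (u (G.bd e).1) = Γt (G.bd e).2 e (u (G.bd e).2)) →
        ‖
          ((∑' v, (⟪(Jdec f - Bt (Jdec f)) v, u v⟫_ℂ
              - ⟪ιt v ((Jdec f - Bt (Jdec f)) v), ιt v (u v)⟫_ℂ))
            - ∑' v, (⟪f v, (J'dec u - B (J'dec u)) v⟫_ℂ
              - ⟪ι v (f v), ι v ((J'dec u - B (J'dec u)) v)⟫_ℂ))‖
          ≤ 3 * δ * ‖f‖ * ‖u‖ := by
  intro f hf u hu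
  have hdec : ‖coupledEnergyForm ιt (Jdec f) u - coupledEnergyForm ι f (J'dec u)‖
      ≤ δ * (‖f‖ * ‖u‖) :=
    norm_coupledEnergyForm_sub_le hιt_contr hι_contr hδ.le fun v => by
      rw [hJdec, hJ'dec, ← mul_assoc]
      exact hclose v (f v) (u v)
  have hBt : ‖coupledEnergyForm ιt (Bt (Jdec f)) u‖ ≤ δ * ‖f‖ * ‖u‖ :=
    (norm_coupledEnergyForm_le hιt_contr _ u).trans
      (mul_le_mul_of_nonneg_right (hBt_small f hf) (norm_nonneg u))
  have hB : ‖coupledEnergyForm ι f (B (J'dec u))‖ ≤ δ * ‖f‖ * ‖u‖ :=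
    (norm_coupledEnergyForm_le hι_contr f _).trans <|
      (mul_le_mul_of_nonneg_left (hB_small u hu) (norm_nonneg f)).trans_eq (by ring)
  change ‖coupledEnergyForm ιt (Jdec f - Bt (Jdec f)) u
    - coupledEnergyForm ι f (J'dec u - B (J'dec u))‖ ≤ _
  rw [coupledEnergyForm_sub_left hιt_contr, coupledEnergyForm_sub_right hι_contr]
  refine (norm_sub_sub_sub_le _ _ _ _).trans ?_
  linarith

/-- Two vertex-coupling families with energy structures, the energy
forms `h_v(f,g) = ⟪f,g⟫_{H¹_v} − ⟪ι_v f, ι_v g⟫_{H_v}` being `δ`-close via `J¹_v`, `J'¹_v`,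
and smoothing operators `B`, `B̃` with `‖B̃(J^{1,dec}f)‖ ≤ δ‖f‖`, `‖B(J'^{1,dec}u)‖ ≤ δ‖u‖`.
Then the coupled energy forms are `3δ`-close:
`|h̃(J¹f, u) − h(f, J'¹u)| ≤ 3δ‖f‖‖u‖` for `f ∈ H¹`, `u ∈ H̃¹`, where
`J¹ = (id − B̃)∘J^{1,dec}` and `J'¹ = (id − B)∘J'^{1,dec}`. -/
theorem stmt14 {V E : Type*} [Countable V] [Countable E]
    (G : LocallyFiniteGraph V E)
    -- first coupling family with energy structure
    (H1 : V → Type*) [∀ v, NormedAddCommGroup (H1 v)] [∀ v, InnerProductSpace ℂ (H1 v)]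
    [∀ v, CompleteSpace (H1 v)]
    (Gb : E → Type*) [∀ e, NormedAddCommGroup (Gb e)] [∀ e, InnerProductSpace ℂ (Gb e)]
    [∀ e, CompleteSpace (Gb e)]
    (Hv : V → Type*) [∀ v, NormedAddCommGroup (Hv v)] [∀ v, InnerProductSpace ℂ (Hv v)]
    [∀ v, CompleteSpace (Hv v)]
    (Γ : ∀ v, ∀ e, H1 v →L[ℂ] Gb e) (c : ℝ)
    (hc : ∀ v, ∀ f : H1 v,
      ∑ e ∈ (G.locFin v).toFinset, ‖Γ v e f‖ ^ 2 ≤ c ^ 2 * ‖f‖ ^ 2)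
    (ι : ∀ v, H1 v →L[ℂ] Hv v)
    (hι_inj : ∀ v, Function.Injective (ι v))
    (hι_contr : ∀ v, ∀ f : H1 v, ‖ι v f‖ ≤ ‖f‖)
    -- second (tilde) coupling family with energy structure
    (H1t : V → Type*) [∀ v, NormedAddCommGroup (H1t v)] [∀ v, InnerProductSpace ℂ (H1t v)]
    [∀ v, CompleteSpace (H1t v)]
    (Gbt : E → Type*) [∀ e, NormedAddCommGroup (Gbt e)] [∀ e, InnerProductSpace ℂ (Gbt e)]
    [∀ e, CompleteSpace (Gbt e)]
    (Hvt : V → Type*) [∀ v, NormedAddCommGroup (Hvt v)] [∀ v, InnerProductSpace ℂ (Hvt v)]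
    [∀ v, CompleteSpace (Hvt v)]
    (Γt : ∀ v, ∀ e, H1t v →L[ℂ] Gbt e) (ct : ℝ)
    (hct : ∀ v, ∀ u : H1t v,
      ∑ e ∈ (G.locFin v).toFinset, ‖Γt v e u‖ ^ 2 ≤ ct ^ 2 * ‖u‖ ^ 2)
    (ιt : ∀ v, H1t v →L[ℂ] Hvt v)
    (hιt_inj : ∀ v, Function.Injective (ιt v))
    (hιt_contr : ∀ v, ∀ u : H1t v, ‖ιt v u‖ ≤ ‖u‖)
    -- componentwise identification operators and their ℓ²-direct sums
    (J1 : ∀ v, H1 v →L[ℂ] H1t v) (cJ1 : ℝ) (hJ1 : ∀ v, ‖J1 v‖ ≤ cJ1)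
    (J'1 : ∀ v, H1t v →L[ℂ] H1 v) (cJ'1 : ℝ) (hJ'1 : ∀ v, ‖J'1 v‖ ≤ cJ'1)
    (Jdec : lp H1 2 →L[ℂ] lp H1t 2)
    (hJdec : ∀ (f : lp H1 2) (v : V), Jdec f v = J1 v (f v))
    (J'dec : lp H1t 2 →L[ℂ] lp H1 2)
    (hJ'dec : ∀ (u : lp H1t 2) (v : V), J'dec u v = J'1 v (u v))
    (δ : ℝ) (hδ : 0 < δ)
    -- `δ`-closeness of the building-block energy forms
    (hclose : ∀ v, ∀ (f : H1 v) (u : H1t v),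
      ‖((⟪J1 v f, u⟫_ℂ - ⟪ιt v (J1 v f), ιt v u⟫_ℂ)
          - (⟪f, J'1 v u⟫_ℂ - ⟪ι v f, ι v (J'1 v u)⟫_ℂ))‖
        ≤ δ * ‖f‖ * ‖u‖)
    -- smoothing operators for the two coupled spaces
    (B : lp H1 2 →L[ℂ] lp H1 2)
    (hB_smooth : ∀ f : lp H1 2, ∀ e,
      Γ (G.bd e).1 e ((f - B f) (G.bd e).1) = Γ (G.bd e).2 e ((f - B f) (G.bd e).2))
    (Bt : lp H1t 2 →L[ℂ] lp H1t 2)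
    (hBt_smooth : ∀ u : lp H1t 2, ∀ e,
      Γt (G.bd e).1 e ((u - Bt u) (G.bd e).1) = Γt (G.bd e).2 e ((u - Bt u) (G.bd e).2))
    (hBt_small : ∀ f : lp H1 2,
      (∀ e, Γ (G.bd e).1 e (f (G.bd e).1) = Γ (G.bd e).2 e (f (G.bd e).2)) →
      ‖Bt (Jdec f)‖ ≤ δ * ‖f‖)
    (hB_small : ∀ u : lp H1t 2,
      (∀ e, Γt (G.bd e).1 e (u (G.bd e).1) = Γt (G.bd e).2 e (u (G.bd e).2)) →
      ‖B (J'dec u)‖ ≤ δ * ‖u‖) :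
    ∀ f : lp H1 2,
      (∀ e, Γ (G.bd e).1 e (f (G.bd e).1) = Γ (G.bd e).2 e (f (G.bd e).2)) →
      ∀ u : lp H1t 2,
        (∀ e, Γt (G.bd e).1 e (u (G.bd e).1) = Γt (G.bd e).2 e (u (G.bd e).2)) →
        ‖
          ((∑' v, (⟪(Jdec f - Bt (Jdec f)) v, u v⟫_ℂ
              - ⟪ιt v ((Jdec f - Bt (Jdec f)) v), ιt v (u v)⟫_ℂ))
            - ∑' v, (⟪f v, (J'dec u - B (J'dec u)) v⟫_ℂ
              - ⟪ι v (f v), ι v ((J'dec u - B (J'dec u)) v)⟫_ℂ))‖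
          ≤ 3 * δ * ‖f‖ * ‖u‖ :=
  stmt14_general G H1 Gb Hv Γ ι hι_contr H1t Gbt Hvt Γt ιt hιt_contr J1 J'1 Jdec hJdec J'dec hJ'dec
    δ hδ hclose B Bt hBt_small hB_small
end

section
/- Let (V,E,∂) be a locally finite graph carrying two vertex-coupling families of boundary maps Γ_{v,e} : H¹_v → G_e and Γ̃_{v,e} : H̃¹_v → G̃_e, with c̃² := sup_v ‖u ↦ (Γ̃_{v,e}u)_{e∈E_v}‖² < ∞. Let δ > 0, let J¹_v : H¹_v → H̃¹_v be bounded with sup_v ‖J¹_v‖ < ∞, let I_e : G_e → G̃_e be bounded with sup_e ‖I_e‖ < ∞, and assume Σ_{e∈E_v} ‖(I_e ∘ Γ_{v,e} − Γ̃_{v,e} ∘ J¹_v) f_v‖²_{G̃_e} ≤ δ²·‖f_v‖²_{H¹_v} for every v ∈ V and f_v ∈ H¹_v. Let B̃ be a smoothing operator for the coupled space H̃¹ with ‖B̃(J^{1,dec} f)‖_{H̃^{1,dec}} ≤ δ·‖f‖ for all f ∈ H¹, and set J¹ := (id − B̃)∘J^{1,dec} with J^{1,dec} := ⊕_v J¹_v.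 Then the coupled boundary maps are close: for every f ∈ H¹, ‖I(Γ f) − Γ̃(J¹ f)‖_{⊕_e G̃_e} ≤ δ·√(1 + c̃²)·‖f‖_{H^{1,dec}}, where (Iφ)_e := I_e φ_e. -/
theorem lp.hasSum_norm_sq {ι : Type*} {F : ι → Type*} [∀ i, NormedAddCommGroup (F i)]
    (f : lp F 2) : HasSum (fun i => ‖f i‖ ^ 2) (‖f‖ ^ 2) := by
  simpa using lp.hasSum_norm (p := 2) (by norm_num) f

theorem Finset.sum_norm_add_sq_le {ι : Type*} {F : ι → Type*}
    [∀ i, SeminormedAddCommGroup (F i)] (s : Finset ι) {a b : ∀ i, F i} {α β : ℝ}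
    (hα : 0 ≤ α) (hβ : 0 ≤ β) (ha : ∑ i ∈ s, ‖a i‖ ^ 2 ≤ α ^ 2)
    (hb : ∑ i ∈ s, ‖b i‖ ^ 2 ≤ β ^ 2) :
    ∑ i ∈ s, ‖a i + b i‖ ^ 2 ≤ (α + β) ^ 2 := by
  have hab : ∑ i ∈ s, ‖a i‖ * ‖b i‖ ≤ α * β :=
    (Real.sum_mul_le_sqrt_mul_sqrt s _ _).trans <| mul_le_mul
      ((Real.sqrt_le_sqrt ha).trans_eq (Real.sqrt_sq hα))
      ((Real.sqrt_le_sqrt hb).trans_eq (Real.sqrt_sq hβ)) (Real.sqrt_nonneg _) hα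
  calc ∑ i ∈ s, ‖a i + b i‖ ^ 2
      ≤ ∑ i ∈ s, (‖a i‖ ^ 2 + 2 * (‖a i‖ * ‖b i‖) + ‖b i‖ ^ 2) :=
        Finset.sum_le_sum fun i _ => by
          nlinarith [norm_add_le (a i) (b i), norm_nonneg (a i + b i)]
    _ = ∑ i ∈ s, ‖a i‖ ^ 2 + 2 * ∑ i ∈ s, ‖a i‖ * ‖b i‖ + ∑ i ∈ s, ‖b i‖ ^ 2 := by
        rw [Finset.sum_add_distrib, Finset.sum_add_distrib, Finset.mul_sum]
    _ ≤ (α + β) ^ 2 := by nlinarith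

theorem Finset.sum_norm_add_sq_le_one_add_sq_mul {ι : Type*} {F : ι → Type*}
    [∀ i, SeminormedAddCommGroup (F i)] (s : Finset ι) {a b : ∀ i, F i} {δ c x y : ℝ}
    (hx : 0 ≤ x) (hy : 0 ≤ y) (ha : ∑ i ∈ s, ‖a i‖ ^ 2 ≤ δ ^ 2 * x ^ 2)
    (hb : ∑ i ∈ s, ‖b i‖ ^ 2 ≤ c ^ 2 * y ^ 2) :
    ∑ i ∈ s, ‖a i + b i‖ ^ 2 ≤ (1 + c ^ 2) * (δ ^ 2 * x ^ 2 + y ^ 2) := by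
  refine (s.sum_norm_add_sq_le (α := |δ| * x) (β := |c| * y) (by positivity) (by positivity)
    (by rwa [mul_pow, sq_abs]) (by rwa [mul_pow, sq_abs])).trans ?_
  rw [← sq_abs δ, ← sq_abs c]
  nlinarith [sq_nonneg (|c| * |δ| * x - y)]

namespace LocallyFiniteGraph

variable {V E : Type*} [Countable V] [Countable E] (G : LocallyFiniteGraph V E)

def incidence (p : E × Bool) : V × E :=
  (cond p.2 (G.bd p.1).1 (G.bd p.1).2, p.1)

theorem incidence_injective : Function.Injective G.incidence := by
  rintro ⟨e, b⟩ ⟨e', b'⟩ h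
  simp only [incidence, Prod.mk.injEq] at h
  obtain ⟨hv, rfl⟩ := h
  cases b <;> cases b' <;> simp_all [G.no_loops e, (G.no_loops e).symm]

theorem hasSum_add_endpoints {T : V → E → ℝ} (hT : ∀ v e, 0 ≤ T v e) {S : ℝ}
    (hS : HasSum (fun v => ∑ e ∈ (G.locFin v).toFinset, T v e) S) :
    HasSum (fun e => T (G.bd e).1 e + T (G.bd e).2 e) S := by
  classical
  set F : V × E → ℝ := fun p => if p.2 ∈ (G.locFin p.1).toFinset then T p.1 p.2 else 0
  have hfiber (v : V) : HasSum (fun e => F (v, e)) (∑ e ∈ (G.locFin v).toFinset, T v e) := by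
    rw [← Finset.sum_congr rfl fun e he => (if_pos he : F (v, e) = T v e)]
    exact hasSum_sum_of_ne_finset_zero fun e he => if_neg he
  have hF : HasSum F S := by
    have hsummable : Summable F := (summable_prod_of_nonneg fun p => by
      dsimp only [F]; split_ifs <;> simp [hT]).2
      ⟨fun v => (hfiber v).summable, by simpa only [(hfiber _).tsum_eq] using hS.summable⟩
    exact (hS.unique (hsummable.hasSum.prod_fiberwise hfiber)) ▸ hsummable.hasSum
  have hFinc : HasSum (F ∘ G.incidence) S := by
    refine (G.incidence_injective.hasSum_iff fun ⟨v, e⟩ hp => if_neg ?_).2 hF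
    simp only [Set.Finite.mem_toFinset, Set.mem_ofPred_eq]
    rintro (rfl | rfl)
    exacts [hp ⟨(e, true), rfl⟩, hp ⟨(e, false), rfl⟩]
  convert hFinc.prod_fiberwise fun e => hasSum_fintype _ using 2 with e
  simp [F, incidence]

theorem summable_and_two_mul_tsum_le {T : V → E → ℝ} (hT : ∀ v e, 0 ≤ T v e)
    (hsymm : ∀ e, T (G.bd e).1 e = T (G.bd e).2 e) {D : V → ℝ} (hD : Summable D)
    (hTD : ∀ v, ∑ e ∈ (G.locFin v).toFinset, T v e ≤ D v) :
    Summable (fun e => T (G.bd e).1 e) ∧ 2 * ∑' e, T (G.bd e).1 e ≤ ∑' v, D v := by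
  have hvert : Summable fun v => ∑ e ∈ (G.locFin v).toFinset, T v e :=
    hD.of_nonneg_of_le (fun v => Finset.sum_nonneg fun e _ => hT v e) hTD
  have hedge := G.hasSum_add_endpoints hT hvert.hasSum
  simp_rw [← hsymm, ← two_mul] at hedge
  have hhalf : HasSum (fun e => T (G.bd e).1 e)
      ((∑' v, ∑ e ∈ (G.locFin v).toFinset, T v e) / 2) := by
    simpa using hedge.div_const 2
  refine ⟨hhalf.summable, ?_⟩
  rw [hhalf.tsum_eq]
  linarith [hvert.tsum_le_tsum hTD hD]

end LocallyFiniteGraph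

theorem stmt15_general {V E : Type*} [Countable V] [Countable E]
    (G : LocallyFiniteGraph V E)
    (H1 : V → Type*) [∀ v, NormedAddCommGroup (H1 v)] [∀ v, InnerProductSpace ℂ (H1 v)]
    (Gb : E → Type*) [∀ e, NormedAddCommGroup (Gb e)] [∀ e, InnerProductSpace ℂ (Gb e)]
    (H1t : V → Type*) [∀ v, NormedAddCommGroup (H1t v)] [∀ v, InnerProductSpace ℂ (H1t v)]
    (Gbt : E → Type*) [∀ e, NormedAddCommGroup (Gbt e)] [∀ e, InnerProductSpace ℂ (Gbt e)]
    (Γ : ∀ v, ∀ e, H1 v →L[ℂ] Gb e)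
    (Γt : ∀ v, ∀ e, H1t v →L[ℂ] Gbt e) (ct : ℝ)
    (hct : ∀ v, ∀ u : H1t v,
      ∑ e ∈ (G.locFin v).toFinset, ‖Γt v e u‖ ^ 2 ≤ ct ^ 2 * ‖u‖ ^ 2)
    -- identification operators
    (J1 : ∀ v, H1 v →L[ℂ] H1t v)
    (I : ∀ e, Gb e →L[ℂ] Gbt e)
    (Jdec : lp H1 2 →L[ℂ] lp H1t 2)
    (hJdec : ∀ (f : lp H1 2) (v : V), Jdec f v = J1 v (f v))
    (δ : ℝ)
    (hclose : ∀ v, ∀ fv : H1 v,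
      ∑ e ∈ (G.locFin v).toFinset, ‖I e (Γ v e fv) - Γt v e (J1 v fv)‖ ^ 2
        ≤ δ ^ 2 * ‖fv‖ ^ 2)
    -- the smoothing operator `B̃` for the tilde coupled space
    (Bt : lp H1t 2 →L[ℂ] lp H1t 2)
    (hBt_smooth : ∀ u : lp H1t 2, ∀ e,
      Γt (G.bd e).1 e ((u - Bt u) (G.bd e).1) = Γt (G.bd e).2 e ((u - Bt u) (G.bd e).2))
    (hBt_small : ∀ f : lp H1 2,
      (∀ e, Γ (G.bd e).1 e (f (G.bd e).1) = Γ (G.bd e).2 e (f (G.bd e).2)) →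
      ‖Bt (Jdec f)‖ ≤ δ * ‖f‖) :
    ∀ f : lp H1 2,
      (∀ e, Γ (G.bd e).1 e (f (G.bd e).1) = Γ (G.bd e).2 e (f (G.bd e).2)) →
      (Summable fun e =>
        ‖I e (Γ (G.bd e).1 e (f (G.bd e).1))
          - Γt (G.bd e).1 e ((Jdec f - Bt (Jdec f)) (G.bd e).1)‖ ^ 2) ∧
      ∑' e, ‖I e (Γ (G.bd e).1 e (f (G.bd e).1))
          - Γt (G.bd e).1 e ((Jdec f - Bt (Jdec f)) (G.bd e).1)‖ ^ 2
        ≤ δ ^ 2 * (1 + ct ^ 2) * ‖f‖ ^ 2 := by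
  intro f hf
  set w := Bt (Jdec f)
  have hvertex (v : V) : ∑ e ∈ (G.locFin v).toFinset,
      ‖I e (Γ v e (f v)) - Γt v e ((Jdec f - w) v)‖ ^ 2
        ≤ (1 + ct ^ 2) * (δ ^ 2 * ‖f v‖ ^ 2 + ‖w v‖ ^ 2) := by
    have hsplit (e : E) : I e (Γ v e (f v)) - Γt v e ((Jdec f - w) v)
        = (I e (Γ v e (f v)) - Γt v e (J1 v (f v))) + Γt v e (w v) := by
      rw [lp.coeFn_sub, Pi.sub_apply, hJdec, map_sub]; abel
    simp only [hsplit]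
    exact Finset.sum_norm_add_sq_le_one_add_sq_mul _ (norm_nonneg _) (norm_nonneg _)
      (hclose v (f v)) (hct v (w v))
  have hD : HasSum (fun v => (1 + ct ^ 2) * (δ ^ 2 * ‖f v‖ ^ 2 + ‖w v‖ ^ 2))
      ((1 + ct ^ 2) * (δ ^ 2 * ‖f‖ ^ 2 + ‖w‖ ^ 2)) :=
    (((lp.hasSum_norm_sq f).mul_left _).add (lp.hasSum_norm_sq w)).mul_left _
  obtain ⟨hsum, hle⟩ := G.summable_and_two_mul_tsum_le (fun _ _ => sq_nonneg _)
    (fun e => by rw [hf e, hBt_smooth (Jdec f) e]) hD.summable hvertex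
  refine ⟨hsum, ?_⟩
  have hw : ‖w‖ ^ 2 ≤ δ ^ 2 * ‖f‖ ^ 2 := by
    rw [← mul_pow]; exact pow_le_pow_left₀ (norm_nonneg _) (hBt_small f hf) 2
  rw [hD.tsum_eq] at hle
  nlinarith [mul_le_mul_of_nonneg_left hw (by positivity : (0 : ℝ) ≤ 1 + ct ^ 2)]

/-- Two vertex-coupling families with
`c̃² = sup_v ‖(Γ̃_{v,e})_{e∈E_v}‖² < ∞`, identification operators `J¹_v`, `I_e` with
`Σ_{e∈E_v} ‖(I_eΓ_{v,e} − Γ̃_{v,e}J¹_v)f_v‖² ≤ δ²‖f_v‖²`, and a smoothing operator `B̃`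
with `‖B̃(J^{1,dec}f)‖ ≤ δ‖f‖` on `H¹`.  Then the coupled boundary maps are close:
`‖I(Γf) − Γ̃(J¹f)‖ ≤ δ·√(1+c̃²)·‖f‖` for every `f ∈ H¹` (stated squared, as a bound on
the ℓ²-sum over the edges), where `J¹ = (id − B̃)∘J^{1,dec}`. -/
theorem stmt15 {V E : Type*} [Countable V] [Countable E]
    (G : LocallyFiniteGraph V E)
    (H1 : V → Type*) [∀ v, NormedAddCommGroup (H1 v)] [∀ v, InnerProductSpace ℂ (H1 v)]
    [∀ v, CompleteSpace (H1 v)]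
    (Gb : E → Type*) [∀ e, NormedAddCommGroup (Gb e)] [∀ e, InnerProductSpace ℂ (Gb e)]
    [∀ e, CompleteSpace (Gb e)]
    (H1t : V → Type*) [∀ v, NormedAddCommGroup (H1t v)] [∀ v, InnerProductSpace ℂ (H1t v)]
    [∀ v, CompleteSpace (H1t v)]
    (Gbt : E → Type*) [∀ e, NormedAddCommGroup (Gbt e)] [∀ e, InnerProductSpace ℂ (Gbt e)]
    [∀ e, CompleteSpace (Gbt e)]
    (Γ : ∀ v, ∀ e, H1 v →L[ℂ] Gb e) (c : ℝ)
    (hc : ∀ v, ∀ f : H1 v,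
      ∑ e ∈ (G.locFin v).toFinset, ‖Γ v e f‖ ^ 2 ≤ c ^ 2 * ‖f‖ ^ 2)
    (Γt : ∀ v, ∀ e, H1t v →L[ℂ] Gbt e) (ct : ℝ)
    (hct : ∀ v, ∀ u : H1t v,
      ∑ e ∈ (G.locFin v).toFinset, ‖Γt v e u‖ ^ 2 ≤ ct ^ 2 * ‖u‖ ^ 2)
    -- identification operators
    (J1 : ∀ v, H1 v →L[ℂ] H1t v) (cJ1 : ℝ) (hJ1 : ∀ v, ‖J1 v‖ ≤ cJ1)
    (I : ∀ e, Gb e →L[ℂ] Gbt e) (cI : ℝ) (hI : ∀ e, ‖I e‖ ≤ cI)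
    (Jdec : lp H1 2 →L[ℂ] lp H1t 2)
    (hJdec : ∀ (f : lp H1 2) (v : V), Jdec f v = J1 v (f v))
    (δ : ℝ) (hδ : 0 < δ)
    (hclose : ∀ v, ∀ fv : H1 v,
      ∑ e ∈ (G.locFin v).toFinset, ‖I e (Γ v e fv) - Γt v e (J1 v fv)‖ ^ 2
        ≤ δ ^ 2 * ‖fv‖ ^ 2)
    -- the smoothing operator `B̃` for the tilde coupled space
    (Bt : lp H1t 2 →L[ℂ] lp H1t 2)
    (hBt_smooth : ∀ u : lp H1t 2, ∀ e,
      Γt (G.bd e).1 e ((u - Bt u) (G.bd e).1) = Γt (G.bd e).2 e ((u - Bt u) (G.bd e).2))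
    (hBt_small : ∀ f : lp H1 2,
      (∀ e, Γ (G.bd e).1 e (f (G.bd e).1) = Γ (G.bd e).2 e (f (G.bd e).2)) →
      ‖Bt (Jdec f)‖ ≤ δ * ‖f‖) :
    ∀ f : lp H1 2,
      (∀ e, Γ (G.bd e).1 e (f (G.bd e).1) = Γ (G.bd e).2 e (f (G.bd e).2)) →
      (Summable fun e =>
        ‖I e (Γ (G.bd e).1 e (f (G.bd e).1))
          - Γt (G.bd e).1 e ((Jdec f - Bt (Jdec f)) (G.bd e).1)‖ ^ 2) ∧
      ∑' e, ‖I e (Γ (G.bd e).1 e (f (G.bd e).1))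
          - Γt (G.bd e).1 e ((Jdec f - Bt (Jdec f)) (G.bd e).1)‖ ^ 2
        ≤ δ ^ 2 * (1 + ct ^ 2) * ‖f‖ ^ 2 :=
  stmt15_general G H1 Gb H1t Gbt Γ Γt ct hct J1 I Jdec hJdec δ hclose Bt hBt_smooth hBt_small
end
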